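/- For every integer n, BP(n)·(BP(n))*_j + BP(n−1)·(BP(n−1))*_j = 12·(−P(2n+2)·1 + P(2n+2)·i). -/

import Mathlib

open scoped TensorProduct

noncomputable def bi : ℂ ⊗[ℝ] ℂ := Complex.I ⊗ₜ[ℝ] 1
noncomputable def bj : ℂ ⊗[ℝ] ℂ := (1 : ℂ) ⊗ₜ[ℝ] Complex.I
noncomputable def bij : ℂ ⊗[ℝ] ℂ := Complex.I ⊗ₜ[ℝ] Complex.I

/-- The bicomplex Pell number `BP n = P n + P (n+1) i + P (n+2) j + P (n+3) ij`. -/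
noncomputable def BP (P : ℤ → ℤ) (n : ℤ) : ℂ ⊗[ℝ] ℂ :=
  (P n : ℝ) • (1 : ℂ ⊗[ℝ] ℂ) + (P (n + 1) : ℝ) • bi + (P (n + 2) : ℝ) • bj +
    (P (n + 3) : ℝ) • bij

/-- The j-conjugate of the bicomplex Pell number. -/
noncomputable def BPconjJ (P : ℤ → ℤ) (n : ℤ) : ℂ ⊗[ℝ] ℂ :=
  (P n : ℝ) • (1 : ℂ ⊗[ℝ] ℂ) + (P (n + 1) : ℝ) • bi - (P (n + 2) : ℝ) • bj -
    (P (n + 3) : ℝ) • bij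


/-!
Since `j² = -1` and everything commutes, `(x + y j)(x - y j) = x² + y²` with `x = a + b i`,
`y = c + d i`, so `BP n · BP*_j n` only has components along `1` and `i`. Adding the terms for
`n` and `n - 1` and writing everything through `P n` and `P (n + 1)`, both components reduce to
multiples of `P (n + 1) (P (n + 2) + P n)`, which is `P (2n + 2)` by the addition formula
`P (m + n + 1) = P (m + 1) P (n + 1) + P m P n`. That formula holds because both sides satisfy
the Pell recurrence in `m` and agree at `m = 0, 1`.
-/

def IsPellSeq {R : Type*} [CommRing R] (X : ℤ → R) : Prop :=
  ∀ n, X (n + 2) = 2 * X (n + 1) + X n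

namespace IsPellSeq

variable {R : Type*} [CommRing R] {X Y : ℤ → R}

lemma comp_add_right (hX : IsPellSeq X) (k : ℤ) : IsPellSeq fun n ↦ X (n + k) := fun n ↦ by
  simpa only [add_right_comm _ k] using hX (n + k)

lemma add (hX : IsPellSeq X) (hY : IsPellSeq Y) : IsPellSeq (X + Y) := fun n ↦ by
  simp only [Pi.add_apply, hX n, hY n]
  ring

lemma mul_const (hX : IsPellSeq X) (c : R) : IsPellSeq fun n ↦ X n * c := fun n ↦ by
  simp only [hX n]
  ring

lemma ext (hX : IsPellSeq X) (hY : IsPellSeq Y) (h0 : X 0 = Y 0) (h1 : X 1 = Y 1) : X = Y := by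
  suffices ∀ m, X m = Y m ∧ X (m + 1) = Y (m + 1) from funext fun m ↦ (this m).1
  intro m
  induction m using Int.induction_on with
  | zero => exact ⟨h0, by simpa using h1⟩
  | succ m ih =>
    refine ⟨ih.2, ?_⟩
    rw [add_assoc, one_add_one_eq_two, hX, hY, ih.1, ih.2]
  | pred m ih =>
    refine ⟨?_, by rw [sub_add_cancel]; exact ih.1⟩
    have hXm := hX (-m - 1)
    have hYm := hY (-m - 1)
    rw [show -(m : ℤ) - 1 + 2 = -m + 1 by ring, sub_add_cancel] at hXm hYm
    linear_combination ih.2 - 2 * ih.1 - hXm + hYm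

lemma sub_one (hX : IsPellSeq X) (n : ℤ) : X (n - 1) = X (n + 1) - 2 * X n := by
  have := hX (n - 1)
  rw [show n - 1 + 2 = n + 1 by ring, sub_add_cancel] at this
  linear_combination -this

lemma add_three (hX : IsPellSeq X) (n : ℤ) : X (n + 3) = 2 * X (n + 2) + X (n + 1) := by
  simpa only [add_assoc, Int.reduceAdd] using hX (n + 1)

lemma add_add_one {P : ℤ → R} (hP : IsPellSeq P) (hP0 : P 0 = 0) (hP1 : P 1 = 1)
    (hX : IsPellSeq X) (m n : ℤ) : X (m + n + 1) = P (m + 1) * X (n + 1) + P m * X n := by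
  have hP2 : P 2 = 2 := by simpa [hP0, hP1] using hP 0
  have hshift : IsPellSeq fun m ↦ X (m + n + 1) := by
    simpa only [add_assoc] using hX.comp_add_right (n + 1)
  have hcomb : IsPellSeq fun m ↦ P (m + 1) * X (n + 1) + P m * X n :=
    ((hP.comp_add_right 1).mul_const _).add (hP.mul_const _)
  refine congrFun (hshift.ext hcomb ?_ ?_) m
  · simp [hP0, hP1]
  · simp only [add_assoc, Int.reduceAdd, add_comm 1 n, hP2, hP1, one_mul]
    exact hX n

end IsPellSeq

lemma bi_mul_bi : bi * bi = -1 := by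
  simp [bi, Algebra.TensorProduct.tmul_mul_tmul, Algebra.TensorProduct.one_def,
    TensorProduct.neg_tmul]

lemma bj_mul_bj : bj * bj = -1 := by
  simp [bj, Algebra.TensorProduct.tmul_mul_tmul, Algebra.TensorProduct.one_def,
    TensorProduct.tmul_neg]

lemma bi_mul_bj : bi * bj = bij := by
  simp [bi, bj, bij, Algebra.TensorProduct.tmul_mul_tmul]

lemma mul_conjJ (a b c d : ℝ) :
    (a • (1 : ℂ ⊗[ℝ] ℂ) + b • bi + c • bj + d • bij) *
      (a • (1 : ℂ ⊗[ℝ] ℂ) + b • bi - c • bj - d • bij) =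
    (a ^ 2 - b ^ 2 + c ^ 2 - d ^ 2) • (1 : ℂ ⊗[ℝ] ℂ) + (2 * (a * b + c * d)) • bi := by
  -- `Algebra.smul_def` does not match the tensor-product `SMul` instance syntactically
  have smul_eq (r : ℝ) (x : ℂ ⊗[ℝ] ℂ) : r • x = algebraMap ℝ _ r * x := Algebra.smul_def r x
  rw [← bi_mul_bj]
  simp only [smul_eq, mul_one, map_sub, map_add, map_mul, map_pow, map_ofNat]
  linear_combination (algebraMap ℝ _ b ^ 2 + algebraMap ℝ _ d ^ 2) * bi_mul_bi
    - (algebraMap ℝ _ c + algebraMap ℝ _ d * bi) ^ 2 * bj_mul_bj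

lemma BP_mul_BPconjJ (P : ℤ → ℤ) (n : ℤ) :
    BP P n * BPconjJ P n =
      ((P n : ℝ) ^ 2 - (P (n + 1) : ℝ) ^ 2 + (P (n + 2) : ℝ) ^ 2 - (P (n + 3) : ℝ) ^ 2) • 1 +
        (2 * ((P n : ℝ) * P (n + 1) + (P (n + 2) : ℝ) * P (n + 3))) • bi :=
  mul_conjJ _ _ _ _

theorem bicomplexPell_mul_conjJ_add (P : ℤ → ℤ)
    (hP : ∀ n : ℤ, P (n + 2) = 2 * P (n + 1) + P n) (hP0 : P 0 = 0) (hP1 : P 1 = 1)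
    (n : ℤ) :
    BP P n * BPconjJ P n + BP P (n - 1) * BPconjJ P (n - 1) =
      (12 : ℝ) • ((-(P (2 * n + 2)) : ℝ) • (1 : ℂ ⊗[ℝ] ℂ) +
        (P (2 * n + 2) : ℝ) • bi) := by
  have hPell : IsPellSeq P := hP
  have hdouble : P (2 * n + 2) = P (n + 2) * P (n + 1) + P (n + 1) * P n := by
    have := hPell.add_add_one hP0 hP1 hPell (n + 1) n
    rwa [show n + 1 + n + 1 = 2 * n + 2 by ring, add_assoc n 1 1, one_add_one_eq_two] at this
  rw [BP_mul_BPconjJ, BP_mul_BPconjJ, sub_add_cancel, show n - 1 + 2 = n + 1 by ring,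
    show n - 1 + 3 = n + 2 by ring]
  match_scalars <;>
    push_cast [hdouble, hPell.add_three, hPell.sub_one, hP n] <;> ring
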